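/- arXiv:2007.01033 — 4 statements merged into one kernel-verified Lean document; each statement's English description precedes it below -/
import Mathlib

section
/- Let L be a fuzzy lax extension of a Set-functor T. The following are equivalent: (1) L is nonexpansive, i.e. LΔ_{ε,A} ≤ Δ_{ε,TA} for all sets A and all ε > 0; (2) for all functions f : A → B and all ε > 0, L(gr_{ε,f}) ≤ gr_{ε,Tf}; (3) for all sets A, B, the map R ↦ LR is nonexpansive with respect to the supremum metric on fuzzy relations, i.e. sup_{t₁,t₂} |LR₁(t₁,t₂) − LR₂(t₁,t₂)| ≤ sup_{a,b} |R₁(a,b) − R₂(a,b)| for all R₁, R₂ : A ×> B. -/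
open unitInterval

noncomputable section

instance : Fact ((0:ℝ) ≤ 1) := ⟨zero_le_one⟩

/-- A fuzzy relation between `A` and `B` is a map `A × B → [0,1]`. -/
abbrev FRel (A B : Type) : Type := A → B → I

/-- Clamp a real number into the unit interval. -/
def clamp (x : ℝ) : I := Set.projIcc 0 1 zero_le_one x

/-- Composition of fuzzy relations: `(R;S)(a,c) = inf_b min(R(a,b) + S(b,c), 1)`. -/
def fcomp {A B C : Type} (R : FRel A B) (S : FRel B C) : FRel A C :=
  fun a c => ⨅ b : B, clamp ((R a b : ℝ) + (S b c : ℝ))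

/-- Converse of a fuzzy relation. -/
def fconv {A B : Type} (R : FRel A B) : FRel B A := fun b a => R a b

open scoped Classical in
/-- The `ε`-graph of a function. -/
def fgraphE {A B : Type} (ε : I) (f : A → B) : FRel A B :=
  fun a b => if f a = b then ε else 1

/-- The graph of a function. -/
def fgraph {A B : Type} (f : A → B) : FRel A B := fgraphE 0 f

/-- The `ε`-diagonal. -/
def fdiagE (ε : I) (A : Type) : FRel A A := fgraphE ε (id : A → A)

/-- The diagonal. -/
def fdiag (A : Type) : FRel A A := fgraph (id : A → A)

/-- A Set-functor. -/
structure SetFunctor where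
  obj : Type → Type
  map : {A B : Type} → (A → B) → obj A → obj B
  map_id : ∀ (A : Type), map (id : A → A) = id
  map_comp : ∀ {A B C : Type} (f : A → B) (g : B → C), map (g ∘ f) = map g ∘ map f

/-- A fuzzy lax extension of a Set-functor. -/
structure LaxExt (T : SetFunctor) where
  lift : {A B : Type} → FRel A B → FRel (T.obj A) (T.obj B)
  mono : ∀ {A B : Type} (R S : FRel A B), R ≤ S → lift R ≤ lift S
  lax_comp : ∀ {A B C : Type} (R : FRel A B) (S : FRel B C),
    lift (fcomp R S) ≤ fcomp (lift R) (lift S)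
  lax_graph : ∀ {A B : Type} (f : A → B), lift (fgraph f) ≤ fgraph (T.map f)
  lax_graph_conv : ∀ {A B : Type} (f : A → B),
    lift (fconv (fgraph f)) ≤ fconv (fgraph (T.map f))

end

section Helpers

open unitInterval

lemma coe_clamp (x : ℝ) : (clamp x : ℝ) = max 0 (min 1 x) := rfl

lemma clamp_coe (x : I) : clamp (x : ℝ) = x := Set.projIcc_val zero_le_one x

lemma clamp_eq_one {x : ℝ} (h : 1 ≤ x) : clamp x = 1 := by
  apply Subtype.ext
  simp [coe_clamp, min_eq_left h]

lemma clamp_le_real {x : ℝ} (h : 0 ≤ x) : (clamp x : ℝ) ≤ x := by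
  simp only [coe_clamp]
  exact max_le h (min_le_right _ _)

lemma le_clamp {x : I} {y : ℝ} (h : (x : ℝ) ≤ y) : x ≤ clamp y := by
  rw [← Subtype.coe_le_coe, coe_clamp]
  exact le_max_of_le_right (le_min x.2.2 h)

lemma clamp_mono : Monotone clamp := Set.monotone_projIcc zero_le_one

lemma fcomp_mono {A B C : Type} {R R' : FRel A B} {S S' : FRel B C}
    (hR : R ≤ R') (hS : S ≤ S') : fcomp R S ≤ fcomp R' S' := fun a c =>
  iInf_mono fun b => clamp_mono (add_le_add (Subtype.coe_le_coe.2 (hR a b))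
    (Subtype.coe_le_coe.2 (hS b c)))

lemma fcomp_diagE_left {A B : Type} (ε : I) (R : FRel A B) (a : A) (b : B) :
    fcomp (fdiagE ε A) R a b = clamp ((ε : ℝ) + R a b) := by
  apply le_antisymm
  · exact iInf_le_of_le a (by simp [fcomp, fdiagE, fgraphE])
  · refine le_iInf fun a' => ?_
    by_cases h : a = a'
    · subst h; simp [fdiagE, fgraphE]
    · have h1 : fdiagE ε A a a' = 1 := by simp [fdiagE, fgraphE, h]
      have hco : ((1 : I) : ℝ) = 1 := rfl
      rw [h1, hco, clamp_eq_one (le_add_of_nonneg_right (R a' b).2.1)]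
      exact le_one'

lemma fcomp_diagE_right {A B : Type} (ε : I) (R : FRel A B) (a : A) (b : B) :
    fcomp R (fdiagE ε B) a b = clamp ((R a b : ℝ) + ε) := by
  apply le_antisymm
  · exact iInf_le_of_le b (by simp [fcomp, fdiagE, fgraphE])
  · refine le_iInf fun b' => ?_
    by_cases h : b' = b
    · subst h; simp [fdiagE, fgraphE]
    · have h1 : fdiagE ε B b' b = 1 := by simp [fdiagE, fgraphE, h]
      have hco : ((1 : I) : ℝ) = 1 := rfl
      rw [h1, hco, clamp_eq_one (le_add_of_nonneg_left (R a b').2.1)]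
      exact le_one'

lemma fgraphE_eq_comp {A B : Type} (ε : I) (f : A → B) :
    fgraphE ε f = fcomp (fdiagE ε A) (fgraph f) := by
  funext a b
  rw [fcomp_diagE_left]
  by_cases h : f a = b
  · have : ((fgraph f a b : ℝ)) = 0 := by simp [fgraph, fgraphE, h]
    rw [this, add_zero]
    simp [fgraphE, h, clamp_coe]
  · have : ((fgraph f a b : ℝ)) = 1 := by simp [fgraph, fgraphE, h]
    rw [this, clamp_eq_one (le_add_of_nonneg_left ε.2.1)]
    simp [fgraphE, h]

lemma abs_sub_le_one_I (x y : I) : |(x : ℝ) - y| ≤ 1 :=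
  abs_sub_le_iff.2 ⟨by linarith [x.2.2, y.2.1], by linarith [y.2.2, x.2.1]⟩

lemma real_le_of_forall_pos_le_add {a b : ℝ} (h : ∀ η : ℝ, 0 < η → a ≤ b + η) :
    a ≤ b := by
  by_contra hc
  push_neg at hc
  have := h ((a - b) / 2) (by linarith)
  linarith

/-- Key step for (1) → (3): if `R₂ ≤ R₁ + ε` pointwise and `L` is nonexpansive,
then `L R₂ ≤ L R₁ + ε` pointwise. -/
lemma lift_add_le {T : SetFunctor} (L : LaxExt T)
    (hnd : ∀ (C : Type) (ε : I), 0 < ε → L.lift (fdiagE ε C) ≤ fdiagE ε (T.obj C))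
    {A B : Type} (R₁ R₂ : FRel A B) (ε : I) (hε : 0 < ε)
    (h : ∀ a b, (R₂ a b : ℝ) ≤ (R₁ a b : ℝ) + ε) (t₁ : T.obj A) (t₂ : T.obj B) :
    (L.lift R₂ t₁ t₂ : ℝ) ≤ (L.lift R₁ t₁ t₂ : ℝ) + ε := by
  have h2 : R₂ ≤ fcomp R₁ (fdiagE ε B) := by
    intro a b
    rw [fcomp_diagE_right]
    exact le_clamp (h a b)
  have c1 := L.mono _ _ h2 t₁ t₂
  have c2 := L.lax_comp R₁ (fdiagE ε B) t₁ t₂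
  have c3 := fcomp_mono (le_refl (L.lift R₁)) (hnd B ε hε) t₁ t₂
  rw [fcomp_diagE_right] at c3
  have : L.lift R₂ t₁ t₂ ≤ clamp ((L.lift R₁ t₁ t₂ : ℝ) + ε) :=
    le_trans c1 (le_trans c2 c3)
  calc (L.lift R₂ t₁ t₂ : ℝ) ≤ (clamp ((L.lift R₁ t₁ t₂ : ℝ) + ε) : ℝ) :=
        Subtype.coe_le_coe.2 this
    _ ≤ (L.lift R₁ t₁ t₂ : ℝ) + ε :=
        clamp_le_real (add_nonneg (L.lift R₁ t₁ t₂).2.1 ε.2.1)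

end Helpers

/-- equivalent characterizations of nonexpansiveness of a fuzzy lax extension. -/
theorem nonexpansive_lax_extension_tfae (T : SetFunctor) (L : LaxExt T) :
    ((∀ (A : Type) (ε : I), 0 < ε → L.lift (fdiagE ε A) ≤ fdiagE ε (T.obj A)) ↔
      (∀ (A B : Type) (f : A → B) (ε : I), 0 < ε →
        L.lift (fgraphE ε f) ≤ fgraphE ε (T.map f))) ∧
    ((∀ (A : Type) (ε : I), 0 < ε → L.lift (fdiagE ε A) ≤ fdiagE ε (T.obj A)) ↔
      (∀ (A B : Type) (R₁ R₂ : FRel A B),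
        (⨆ p : T.obj A × T.obj B, |(L.lift R₁ p.1 p.2 : ℝ) - (L.lift R₂ p.1 p.2 : ℝ)|) ≤
          ⨆ p : A × B, |(R₁ p.1 p.2 : ℝ) - (R₂ p.1 p.2 : ℝ)|)) := by
  constructor
  · constructor
    · -- (1) → (2)
      intro h A B f ε hε
      calc L.lift (fgraphE ε f) = L.lift (fcomp (fdiagE ε A) (fgraph f)) := by
            rw [fgraphE_eq_comp]
        _ ≤ fcomp (L.lift (fdiagE ε A)) (L.lift (fgraph f)) := L.lax_comp _ _
        _ ≤ fcomp (fdiagE ε (T.obj A)) (fgraph (T.map f)) :=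
            fcomp_mono (h A ε hε) (L.lax_graph f)
        _ = fgraphE ε (T.map f) := (fgraphE_eq_comp ε (T.map f)).symm
    · -- (2) → (1)
      intro h A ε hε
      have := h A A id ε hε
      rwa [T.map_id] at this
  · constructor
    · -- (1) → (3)
      intro h A B R₁ R₂
      set δ : ℝ := ⨆ p : A × B, |(R₁ p.1 p.2 : ℝ) - (R₂ p.1 p.2 : ℝ)| with hδ
      have hδ0 : 0 ≤ δ := Real.iSup_nonneg fun p => abs_nonneg _
      have hbdd : BddAbove (Set.range fun p : A × B =>
          |(R₁ p.1 p.2 : ℝ) - (R₂ p.1 p.2 : ℝ)|) := by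
        refine ⟨1, ?_⟩
        rintro x ⟨p, rfl⟩
        exact abs_sub_le_one_I _ _
      have hpt : ∀ a b, |(R₁ a b : ℝ) - (R₂ a b : ℝ)| ≤ δ := fun a b =>
        le_ciSup hbdd (a, b)
      refine Real.iSup_le (fun p => ?_) hδ0
      refine real_le_of_forall_pos_le_add fun η hη => ?_
      set ε : I := clamp (δ + η) with hεdef
      have hε : 0 < ε := by
        rw [← Subtype.coe_lt_coe, hεdef, coe_clamp]
        have : (0:ℝ) < min 1 (δ + η) := lt_min one_pos (by linarith)
        calc ((0:I) : ℝ) = 0 := rfl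
          _ < min 1 (δ + η) := this
          _ ≤ max 0 (min 1 (δ + η)) := le_max_right _ _
      have hεle : (ε : ℝ) ≤ δ + η := by
        rw [hεdef, coe_clamp]
        exact max_le (by linarith) (min_le_right _ _)
      have hεge : ∀ (x y : I), (x : ℝ) - y ≤ δ → (x : ℝ) ≤ (y : ℝ) + ε := by
        intro x y hxy
        rw [hεdef, coe_clamp]
        rcases le_total (δ + η) 1 with hc | hc
        · rw [min_eq_right hc, max_eq_right (by linarith)]; linarith
        · rw [min_eq_left hc, max_eq_right zero_le_one]; linarith [x.2.2, y.2.1]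
      have h12 : ∀ a b, (R₂ a b : ℝ) ≤ (R₁ a b : ℝ) + ε := fun a b =>
        hεge _ _ (by linarith [hpt a b, neg_abs_le ((R₁ a b : ℝ) - R₂ a b)])
      have h21 : ∀ a b, (R₁ a b : ℝ) ≤ (R₂ a b : ℝ) + ε := fun a b =>
        hεge _ _ (by linarith [hpt a b, le_abs_self ((R₁ a b : ℝ) - R₂ a b)])
      have k12 := lift_add_le L h R₁ R₂ ε hε h12 p.1 p.2
      have k21 := lift_add_le L h R₂ R₁ ε hε h21 p.1 p.2
      have : |(L.lift R₁ p.1 p.2 : ℝ) - (L.lift R₂ p.1 p.2 : ℝ)| ≤ (ε : ℝ) :=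
        abs_sub_le_iff.2 ⟨by linarith, by linarith⟩
      linarith
    · -- (3) → (1)
      intro h A ε hε t₁ t₂
      have hsup := h A A (fdiagE ε A) (fdiag A)
      have hRHS : (⨆ p : A × A, |(fdiagE ε A p.1 p.2 : ℝ) - (fdiag A p.1 p.2 : ℝ)|)
          ≤ (ε : ℝ) := by
        refine Real.iSup_le (fun p => ?_) ε.2.1
        by_cases hp : p.1 = p.2
        · simp only [fdiagE, fdiag, fgraph, fgraphE, id_eq]
          rw [if_pos hp, if_pos hp]
          have hco : ((0 : I) : ℝ) = 0 := rfl
          rw [hco, sub_zero, abs_of_nonneg ε.2.1]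
        · simp only [fdiagE, fdiag, fgraph, fgraphE, id_eq]
          rw [if_neg hp, if_neg hp, sub_self, abs_zero]
          exact ε.2.1
      have hbdd : BddAbove (Set.range fun p : T.obj A × T.obj A =>
          |(L.lift (fdiagE ε A) p.1 p.2 : ℝ) - (L.lift (fdiag A) p.1 p.2 : ℝ)|) := by
        refine ⟨1, ?_⟩
        rintro x ⟨p, rfl⟩
        exact abs_sub_le_one_I _ _
      have hpt : |(L.lift (fdiagE ε A) t₁ t₂ : ℝ) - (L.lift (fdiag A) t₁ t₂ : ℝ)|
          ≤ (ε : ℝ) := le_trans (le_ciSup hbdd (t₁, t₂)) (le_trans hsup hRHS)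
      have hd : L.lift (fdiag A) ≤ fdiag (T.obj A) := by
        have := L.lax_graph (id : A → A)
        rwa [T.map_id] at this
      by_cases ht : t₁ = t₂
      · subst ht
        have h0 : (fdiag (T.obj A) t₁ t₁ : ℝ) = 0 := by
          simp [fdiag, fgraph, fgraphE]
        have h1 : (L.lift (fdiag A) t₁ t₁ : ℝ) ≤ 0 := by
          rw [← h0]; exact Subtype.coe_le_coe.2 (hd t₁ t₁)
        have h2 : (fdiagE ε (T.obj A) t₁ t₁ : ℝ) = ε := by
          simp [fdiagE, fgraphE]
        rw [← Subtype.coe_le_coe, h2]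
        have := le_abs_self ((L.lift (fdiagE ε A) t₁ t₁ : ℝ) -
          (L.lift (fdiag A) t₁ t₁ : ℝ))
        linarith [(L.lift (fdiag A) t₁ t₁).2.1]
      · have : fdiagE ε (T.obj A) t₁ t₂ = 1 := by
          simp [fdiagE, fgraphE, ht]
        rw [this]
        exact le_one'
end

section
/- Let L be a fuzzy lax extension of a Set-functor T, and let α : A → TA be a coalgebra. The L-behavioural distance d^L_α, defined as the pointwise infimum of all L-simulations R : A ×> A on (A,α), is a hemimetric on A. If moreover L preserves converse, then d^L_α is a pseudometric. -/
/-! The behavioural distance is itself a simulation, and it lies below every simulation.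
The diagonal is a simulation by the graph axiom for `id`, the composite of two simulations is a
simulation by lax composition, and, when `L` preserves converse, so is the converse of a
simulation. Hence `d ≤ Δ`, `d ≤ d ; d` and `d ≤ d˘`, which are reflexivity, the triangle
inequality and symmetry. -/

open unitInterval

/-- `d` is a hemimetric: reflexivity and the triangle inequality. -/
def IsHemimetric {X : Type} (d : FRel X X) : Prop :=
  (∀ x, d x x = 0) ∧ ∀ x y z, (d x z : ℝ) ≤ (d x y : ℝ) + (d y z : ℝ)

/-- `d` is a pseudometric: a symmetric hemimetric. -/
def IsPseudometric {X : Type} (d : FRel X X) : Prop :=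
  IsHemimetric d ∧ ∀ x y, d x y = d y x

/-- `L` preserves converse. -/
def PreservesConv (T : SetFunctor) (L : LaxExt T) : Prop :=
  ∀ (A B : Type) (R : FRel A B), L.lift (fconv R) = fconv (L.lift R)

/-- `R` is an `L`-simulation between coalgebras `α` and `β`. -/
def IsSim (T : SetFunctor) (L : LaxExt T) {A B : Type}
    (α : A → T.obj A) (β : B → T.obj B) (R : FRel A B) : Prop :=
  ∀ a b, L.lift R (α a) (β b) ≤ R a b

/-- `L`-behavioural distance: the pointwise infimum of all `L`-simulations. -/
noncomputable def behDist (T : SetFunctor) (L : LaxExt T) {A B : Type}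
    (α : A → T.obj A) (β : B → T.obj B) : FRel A B :=
  fun a b => ⨅ R : {R : FRel A B // IsSim T L α β R}, R.1 a b

lemma coe_clamp_le_of_nonneg {x : ℝ} (hx : 0 ≤ x) : (clamp x : ℝ) ≤ x :=
  max_le hx (min_le_right _ _)

lemma fdiag_self {A : Type} (a : A) : fdiag A a a = 0 := by
  simp [fdiag, fgraph, fgraphE]

section Simulation

variable {T : SetFunctor} {L : LaxExt T} {A B C : Type}
  {α : A → T.obj A} {β : B → T.obj B} {γ : C → T.obj C}

lemma behDist_le_of_isSim {R : FRel A B} (hR : IsSim T L α β R) (a : A) (b : B) :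
    behDist T L α β a b ≤ R a b :=
  iInf_le (fun S : {S : FRel A B // IsSim T L α β S} => S.1 a b) ⟨R, hR⟩

lemma isSim_behDist : IsSim T L α β (behDist T L α β) := fun a b =>
  le_iInf fun R =>
    (L.mono _ _ (fun a' b' => behDist_le_of_isSim R.2 a' b') _ _).trans (R.2 a b)

lemma isSim_fdiag : IsSim T L α α (fdiag A) := by
  intro a b
  by_cases hab : a = b
  · subst hab
    refine (L.lax_graph id (α a) (α a)).trans_eq ?_
    simp [fgraph, fgraphE, T.map_id, fdiag_self]
  · rw [show fdiag A a b = 1 by simp [fdiag, fgraph, fgraphE, hab]]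
    exact unitInterval.le_one'

lemma IsSim.fcomp {R : FRel A B} {S : FRel B C} (hR : IsSim T L α β R) (hS : IsSim T L β γ S) :
    IsSim T L α γ (fcomp R S) := fun a c =>
  (L.lax_comp R S _ _).trans <| le_iInf fun b =>
    (iInf_le _ (β b)).trans <| Set.monotone_projIcc zero_le_one (add_le_add (hR a b) (hS b c))

lemma IsSim.fconv (hL : PreservesConv T L) {R : FRel A B} (hR : IsSim T L α β R) :
    IsSim T L β α (fconv R) := fun b a => by
  rw [hL A B R]
  exact hR a b

lemma behDist_self (a : A) : behDist T L α α a a = 0 :=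
  le_antisymm ((behDist_le_of_isSim isSim_fdiag a a).trans_eq (fdiag_self a))
    (unitInterval.nonneg _)

lemma behDist_triangle (a b c : A) :
    (behDist T L α α a c : ℝ) ≤ behDist T L α α a b + behDist T L α α b c :=
  calc (behDist T L α α a c : ℝ)
      ≤ clamp (behDist T L α α a b + behDist T L α α b c) :=
        (behDist_le_of_isSim (isSim_behDist.fcomp isSim_behDist) a c).trans (iInf_le _ b)
    _ ≤ behDist T L α α a b + behDist T L α α b c :=
        coe_clamp_le_of_nonneg (add_nonneg (unitInterval.nonneg _) (unitInterval.nonneg _))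

lemma behDist_comm (hL : PreservesConv T L) (a b : A) :
    behDist T L α α a b = behDist T L α α b a :=
  le_antisymm (behDist_le_of_isSim (isSim_behDist.fconv hL) a b)
    (behDist_le_of_isSim (isSim_behDist.fconv hL) b a)

end Simulation

/-- `L`-behavioural distance is a hemimetric; it is a pseudometric if `L`
preserves converse. -/
theorem behavioural_distance_hemimetric (T : SetFunctor) (L : LaxExt T)
    (A : Type) (α : A → T.obj A) :
    IsHemimetric (behDist T L α α) ∧
    (PreservesConv T L → IsPseudometric (behDist T L α α)) :=
  have hemi : IsHemimetric (behDist T L α α) := ⟨behDist_self, behDist_triangle⟩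
  ⟨hemi, fun hL => ⟨hemi, behDist_comm hL⟩⟩
end

section
/- Let T be a Set-functor and e : T[0,1] → [0,1] an evaluation function. Then e is well-behaved if and only if the predicate lifting λ_e is standard (i.e. monotone, subadditive, and preserves the zero function) and e⁻¹[{0}] ⊆ Ti[T{0}], where i : {0} → [0,1] is the inclusion. -/
open unitInterval

/-- Truncated (Łukasiewicz) addition on the unit interval. -/
noncomputable def oplus (x y : I) : I := clamp ((x : ℝ) + (y : ℝ))

/-- The predicate lifting `λ_e(f) = e ∘ Tf` induced by an evaluation function is monotone. -/
def EvMonotone (T : SetFunctor) (e : T.obj I → I) : Prop :=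
  ∀ (X : Type) (f g : X → I), f ≤ g → ∀ t : T.obj X, e (T.map f t) ≤ e (T.map g t)

/-- The induced predicate lifting is subadditive: `λ_e(f ⊕ g) ≤ λ_e(f) ⊕ λ_e(g)`. -/
def EvSubadditive (T : SetFunctor) (e : T.obj I → I) : Prop :=
  ∀ (X : Type) (f g : X → I) (t : T.obj X),
    e (T.map (fun x => oplus (f x) (g x)) t) ≤ oplus (e (T.map f t)) (e (T.map g t))

/-- The induced predicate lifting preserves the zero function. -/
def EvZero (T : SetFunctor) (e : T.obj I → I) : Prop :=
  ∀ (X : Type) (t : T.obj X), e (T.map (fun _ : X => (0 : I)) t) = 0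

/-- The induced predicate lifting `λ_e` is standard. -/
def EvStandard (T : SetFunctor) (e : T.obj I → I) : Prop :=
  EvMonotone T e ∧ EvSubadditive T e ∧ EvZero T e

/-- Euclidean distance on the unit interval, as a map `I × I → I`. -/
noncomputable def dE : I × I → I := fun p => clamp |(p.1 : ℝ) - (p.2 : ℝ)|

/-- The evaluation function `e` is well-behaved. -/
def WellBehaved (T : SetFunctor) (e : T.obj I → I) : Prop :=
  EvMonotone T e ∧
  (∀ t : T.obj (I × I),
    |(e (T.map Prod.fst t) : ℝ) - (e (T.map Prod.snd t) : ℝ)| ≤ (e (T.map dE t) : ℝ)) ∧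
  (∀ t : T.obj I,
    e t = 0 ↔ t ∈ Set.range (T.map (Subtype.val : ({0} : Set I) → I)))

section WBaux

lemma clamp_coe_s12 (r : ℝ) : (clamp r : ℝ) = max 0 (min 1 r) := rfl

lemma clamp_coe_of_mem {r : ℝ} (h0 : 0 ≤ r) (h1 : r ≤ 1) : (clamp r : ℝ) = r := by
  simp [clamp_coe_s12, min_eq_right h1, max_eq_right h0]

lemma oplus_coe (x y : I) : (oplus x y : ℝ) = min 1 ((x : ℝ) + (y : ℝ)) := by
  have h : (0:ℝ) ≤ (x : ℝ) + (y : ℝ) := add_nonneg x.2.1 y.2.1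
  simp [oplus, clamp_coe_s12, max_eq_right (le_min zero_le_one h)]

lemma le_oplus_iff {z x y : I} : z ≤ oplus x y ↔ (z : ℝ) ≤ (x : ℝ) + (y : ℝ) := by
  rw [← Subtype.coe_le_coe, oplus_coe, le_min_iff]
  simp [z.2.2]

lemma oplus_le_sum (x y : I) : (oplus x y : ℝ) ≤ (x : ℝ) + (y : ℝ) := by
  rw [oplus_coe]; exact min_le_right _ _

lemma dE_coe (p : I × I) : (dE p : ℝ) = |(p.1 : ℝ) - (p.2 : ℝ)| := by
  refine clamp_coe_of_mem (abs_nonneg _) ?_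
  rw [abs_sub_le_iff]
  constructor <;> linarith [p.1.2.1, p.1.2.2, p.2.2.1, p.2.2.2]

end WBaux

/-- `e` is well-behaved iff `λ_e` is standard and `e⁻¹[{0}] ⊆ Ti[T{0}]`. -/
theorem well_behaved_iff_standard (T : SetFunctor) (e : T.obj I → I) :
    WellBehaved T e ↔
      (EvStandard T e ∧
        ∀ t : T.obj I, e t = 0 →
          t ∈ Set.range (T.map (Subtype.val : ({0} : Set I) → I))) := by
  constructor
  · rintro ⟨hmono, hlip, hzero⟩
    have hz : EvZero T e := by
      intro X t
      rw [hzero]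
      refine ⟨T.map (fun _ : X => (⟨0, rfl⟩ : ({0} : Set I))) t, ?_⟩
      exact (congrFun (T.map_comp (fun _ : X => (⟨0, rfl⟩ : ({0} : Set I)))
        (Subtype.val : ({0} : Set I) → I)) t).symm
    refine ⟨⟨hmono, ?_, hz⟩, fun t ht => (hzero t).1 ht⟩
    intro X f g t
    set h : X → I × I := fun x => (oplus (f x) (g x), g x) with hh
    have h1 : T.map (fun x => oplus (f x) (g x)) t = T.map Prod.fst (T.map h t) :=
      congrFun (T.map_comp h Prod.fst) t
    have h2 : T.map g t = T.map Prod.snd (T.map h t) :=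
      congrFun (T.map_comp h Prod.snd) t
    have h3 : T.map dE (T.map h t) = T.map (dE ∘ h) t := (congrFun (T.map_comp h dE) t).symm
    have hle : (dE ∘ h) ≤ f := by
      intro x
      rw [← Subtype.coe_le_coe]
      show (dE (h x) : ℝ) ≤ (f x : ℝ)
      rw [dE_coe]
      have hg1 : (g x : ℝ) ≤ (oplus (f x) (g x) : ℝ) := by
        rw [oplus_coe]
        exact le_min (g x).2.2 (le_add_of_nonneg_left (f x).2.1)
      rw [abs_of_nonneg (by simpa using hg1)]
      have := oplus_le_sum (f x) (g x)
      simp only [hh]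
      linarith
    have hmono' : (e (T.map (dE ∘ h) t) : ℝ) ≤ (e (T.map f t) : ℝ) :=
      Subtype.coe_le_coe.2 (hmono _ _ _ hle t)
    have key := hlip (T.map h t)
    rw [← h1, ← h2, h3] at key
    rw [le_oplus_iff]
    have hk := abs_le.1 key
    linarith [hk.2]
  · rintro ⟨⟨hmono, hsub, hz⟩, hincl⟩
    refine ⟨hmono, ?_, ?_⟩
    · intro t
      have key : ∀ F G : I × I → I, F ≤ (fun p => oplus (G p) (dE p)) →
          (e (T.map F t) : ℝ) ≤ (e (T.map G t) : ℝ) + (e (T.map dE t) : ℝ) := by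
        intro F G hFG
        calc (e (T.map F t) : ℝ)
            ≤ (e (T.map (fun p => oplus (G p) (dE p)) t) : ℝ) :=
              Subtype.coe_le_coe.2 (hmono _ _ _ hFG t)
          _ ≤ (oplus (e (T.map G t)) (e (T.map dE t)) : ℝ) :=
              Subtype.coe_le_coe.2 (hsub _ G dE t)
          _ ≤ _ := oplus_le_sum _ _
      have k1 := key Prod.fst Prod.snd (by
        intro p
        rw [← Subtype.coe_le_coe]
        show (p.1 : ℝ) ≤ (oplus p.2 (dE p) : ℝ)
        rw [oplus_coe, dE_coe]
        refine le_min p.1.2.2 ?_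
        have := le_abs_self ((p.1 : ℝ) - (p.2 : ℝ))
        linarith)
      have k2 := key Prod.snd Prod.fst (by
        intro p
        rw [← Subtype.coe_le_coe]
        show (p.2 : ℝ) ≤ (oplus p.1 (dE p) : ℝ)
        rw [oplus_coe, dE_coe]
        refine le_min p.2.2.2 ?_
        have := neg_abs_le ((p.1 : ℝ) - (p.2 : ℝ))
        linarith)
      rw [abs_sub_le_iff]
      constructor <;> linarith
    · intro t
      refine ⟨hincl t, ?_⟩
      rintro ⟨s, rfl⟩
      have hval : (Subtype.val : ({0} : Set I) → I) = fun _ => (0 : I) :=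
        funext fun x => x.2
      rw [hval]
      exact hz _ s
end

section
/- Let L be a nonexpansive, finitarily separable fuzzy lax extension of a Set-functor T, and let (A,α), (B,β) be T-coalgebras. Define d₀ = 0 (the constant-zero fuzzy relation A ×> B), d_{n+1}(a,b) = L d_n(α(a), β(b)), and d_ω = sup_{n<ω} d_n (pointwise). Then (i) L d_ω(α(a), β(b)) = d_ω(a,b) for all a ∈ A, b ∈ B; and (ii) the L-behavioural distance d^L_{α,β}, defined as the pointwise infimum of all L-simulations from (A,α) to (B,β), equals d_ω. -/
open unitInterval

/-- `L` is nonexpansive: `LΔ_{ε,A} ≤ Δ_{ε,TA}` for all `A` and `ε > 0`. -/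
def LaxNonexp (T : SetFunctor) (L : LaxExt T) : Prop :=
  ∀ (A : Type) (ε : I), 0 < ε → L.lift (fdiagE ε A) ≤ fdiagE ε (T.obj A)

/-- The finitary part of `T`: those elements in the image of `T.map i` for the inclusion `i`
of a finite subset. -/
def FinPart (T : SetFunctor) (X : Type) : Set (T.obj X) :=
  {t | ∃ (s : Finset X) (t' : T.obj {x : X // x ∈ s}), T.map Subtype.val t' = t}

/-- `L` is finitarily separable: for each `X`, the finitary part `T_ω X` is dense in `TX`
with respect to the hemimetric `LΔ_X`. -/
def FinitarilySeparable (T : SetFunctor) (L : LaxExt T) : Prop :=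
  ∀ (X : Type) (t : T.obj X) (ε : ℝ), 0 < ε →
    ∃ t' ∈ FinPart T X,
      (L.lift (fdiag X) t t' : ℝ) ≤ ε ∧ (L.lift (fdiag X) t' t : ℝ) ≤ ε

/-!
The heart of the matter is that `L` preserves suprema of increasing chains (`lift_iSup_le`):
then `d_ω` is a fixpoint of `R ↦ LR ∘ (α × β)`, hence a simulation, while every simulation
dominates each `d_n` by induction. For that continuity, finitary separability replaces `t, s` by
elements coming from finite subsets at a cost measured by `LΔ`; on a finite set the supremum of
the chain is reached up to `δ` at a single stage `N`, and nonexpansiveness turns this uniform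
bound into `L R_ω ≤ L R_N + δ`. Naturality of `L` with respect to the inclusions (from the graph
axioms) moves between the finite subsets and the whole sets.
-/

lemma coe_fcomp_le_add {A B C : Type} (R : FRel A B) (S : FRel B C) (a : A) (b : B) (c : C) :
    (fcomp R S a c : ℝ) ≤ R a b + S b c := by
  have hclamp : (clamp ((R a b : ℝ) + S b c) : ℝ) ≤ R a b + S b c :=
    max_le (add_nonneg (R a b).2.1 (S b c).2.1) (min_le_right _ _)
  exact (Subtype.coe_le_coe.2 (iInf_le _ b)).trans hclamp

lemma le_fcomp_of {A B C : Type} {P : FRel A C} {R : FRel A B} {S : FRel B C}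
    (h : ∀ a b c, (P a c : ℝ) ≤ R a b + S b c) : P ≤ fcomp R S := fun a c =>
  le_iInf fun b => Subtype.coe_le_coe.1 <| le_max_of_le_right <| le_min (P a c).2.2 (h a b c)

lemma coe_le_one_add (p q : I) : (p : ℝ) ≤ 1 + q := by
  linarith [p.2.2, q.2.1]

lemma le_fgraphE_fcomp {X Y Z : Type} {ε : I} (f : X → Y) {P : FRel X Z} {S : FRel Y Z}
    (h : ∀ x z, (P x z : ℝ) ≤ S (f x) z + ε) : P ≤ fcomp (fgraphE ε f) S :=
  le_fcomp_of fun x y z => by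
    by_cases hxy : f x = y
    · subst hxy; simpa [fgraphE, add_comm] using h x z
    · simpa [fgraphE, hxy] using coe_le_one_add (P x z) (S y z)

lemma le_fcomp_fgraph {X Y Z : Type} (g : Y → Z) {P : FRel X Z} {R : FRel X Y}
    (h : ∀ x y, P x (g y) ≤ R x y) : P ≤ fcomp R (fgraph g) :=
  le_fcomp_of fun x y z => by
    by_cases hyz : g y = z
    · subst hyz; simpa [fgraph, fgraphE] using h x y
    · simpa [fgraph, fgraphE, hyz, add_comm] using coe_le_one_add (P x z) (R x y)

lemma le_fconv_fgraph_fcomp {X Y Z : Type} (f : Y → X) {P : FRel X Z} {S : FRel Y Z}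
    (h : ∀ y z, P (f y) z ≤ S y z) : P ≤ fcomp (fconv (fgraph f)) S :=
  le_fcomp_of fun x y z => by
    by_cases hyx : f y = x
    · subst hyx; simpa [fconv, fgraph, fgraphE] using h y z
    · simpa [fconv, fgraph, fgraphE, hyx] using coe_le_one_add (P x z) (S y z)

lemma le_fcomp_fconv_fgraph {X Y Z : Type} (g : Z → Y) {P : FRel X Z} {R : FRel X Y}
    (h : ∀ x z, P x z ≤ R x (g z)) : P ≤ fcomp R (fconv (fgraph g)) :=
  le_fcomp_of fun x y z => by
    by_cases hzy : g z = y
    · subst hzy; simpa [fconv, fgraph, fgraphE] using h x z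
    · simpa [fconv, fgraph, fgraphE, hzy, add_comm] using coe_le_one_add (P x z) (R x y)

lemma exists_forall_iSup_le_add {ι : Type*} [Finite ι] {f : ℕ → ι → I} (hf : Monotone f)
    {δ : ℝ} (hδ : 0 < δ) : ∃ N, ∀ i, ((⨆ n, f n i : I) : ℝ) ≤ f N i + δ := by
  have hlim : ∀ i, Filter.Tendsto (fun n => (f n i : ℝ)) Filter.atTop
      (nhds (⨆ n, f n i : I)) := fun i =>
    continuous_subtype_val.continuousAt.tendsto.comp (tendsto_atTop_iSup fun _ _ h => hf h i)
  obtain ⟨N, hN⟩ := (Filter.eventually_all.2 fun i =>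
    (hlim i).eventually (lt_mem_nhds (sub_lt_self _ hδ))).exists
  exact ⟨N, fun i => by linarith [hN i]⟩

section Lift

variable {T : SetFunctor} (L : LaxExt T)

lemma lift_le_add_of_le_fcomp {X Y Z : Type} {P : FRel X Z} {R : FRel X Y} {S : FRel Y Z}
    (h : P ≤ fcomp R S) (t : T.obj X) (u : T.obj Y) (s : T.obj Z) :
    (L.lift P t s : ℝ) ≤ L.lift R t u + L.lift S u s :=
  (Subtype.coe_le_coe.2 ((L.mono _ _ h t s).trans (L.lax_comp R S t s))).trans
    (coe_fcomp_le_add _ _ _ _ _)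

lemma lift_le_fdiag_add {X Y : Type} (R : FRel X Y) (t t' : T.obj X) (s : T.obj Y) :
    (L.lift R t s : ℝ) ≤ L.lift (fdiag X) t t' + L.lift R t' s :=
  lift_le_add_of_le_fcomp L (le_fgraphE_fcomp id fun _ _ => by simp) t t' s

lemma lift_le_add_fdiag {X Y : Type} (R : FRel X Y) (t : T.obj X) (s s' : T.obj Y) :
    (L.lift R t s : ℝ) ≤ L.lift R t s' + L.lift (fdiag Y) s' s :=
  lift_le_add_of_le_fcomp L (le_fcomp_fgraph id fun _ _ => le_rfl) t s' s

lemma coe_lift_fgraph_map {X Y : Type} (f : X → Y) (u : T.obj X) :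
    (L.lift (fgraph f) u (T.map f u) : ℝ) = 0 := by
  have h : L.lift (fgraph f) u (T.map f u) ≤ 0 :=
    (L.lax_graph f u _).trans_eq (by simp [fgraph, fgraphE])
  exact le_antisymm (Subtype.coe_le_coe.2 h) (L.lift _ _ _).2.1

lemma coe_lift_fconv_fgraph_map {X Y : Type} (f : X → Y) (u : T.obj X) :
    (L.lift (fconv (fgraph f)) (T.map f u) u : ℝ) = 0 := by
  have h : L.lift (fconv (fgraph f)) (T.map f u) u ≤ 0 :=
    (L.lax_graph_conv f _ u).trans_eq (by simp [fconv, fgraph, fgraphE])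
  exact le_antisymm (Subtype.coe_le_coe.2 h) (L.lift _ _ _).2.1

lemma lift_map_le {X X' Y Y' : Type} (R : FRel X Y) (f : X' → X) (g : Y' → Y)
    (u : T.obj X') (v : T.obj Y') :
    (L.lift R (T.map f u) (T.map g v) : ℝ) ≤ L.lift (fun x y => R (f x) (g y)) u v := by
  have hf := lift_le_add_of_le_fcomp L (le_fconv_fgraph_fcomp f (S := fun x y => R (f x) y)
    fun _ _ => le_rfl) (T.map f u) u (T.map g v)
  have hg := lift_le_add_of_le_fcomp L (le_fcomp_fgraph g (R := fun x y => R (f x) (g y))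
    fun _ _ => le_rfl) u v (T.map g v)
  linarith [coe_lift_fconv_fgraph_map L f u, coe_lift_fgraph_map L g v]

lemma le_lift_map {X X' Y Y' : Type} (R : FRel X Y) (f : X' → X) (g : Y' → Y)
    (u : T.obj X') (v : T.obj Y') :
    (L.lift (fun x y => R (f x) (g y)) u v : ℝ) ≤ L.lift R (T.map f u) (T.map g v) := by
  have hf := lift_le_add_of_le_fcomp L (le_fgraphE_fcomp f (ε := 0)
    (P := fun x y => R (f x) (g y)) (S := fun x y => R x (g y))
    fun _ _ => by simp) u (T.map f u) v
  have hg := lift_le_add_of_le_fcomp L (le_fcomp_fconv_fgraph g (R := R)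
    fun _ _ => le_rfl) (T.map f u) (T.map g v) v
  have hf0 : (L.lift (fgraphE 0 f) u (T.map f u) : ℝ) = 0 := coe_lift_fgraph_map L f u
  linarith [coe_lift_fconv_fgraph_map L g v]

lemma lift_le_lift_add_of_le_add (hne : LaxNonexp T L) {X Y : Type} {R S : FRel X Y} {ε : ℝ}
    (hε : 0 < ε) (h : ∀ x y, (R x y : ℝ) ≤ S x y + ε) (t : T.obj X) (s : T.obj Y) :
    (L.lift R t s : ℝ) ≤ L.lift S t s + ε := by
  rcases le_or_gt ε 1 with hε1 | hε1
  · set δ : I := ⟨ε, hε.le, hε1⟩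
    have hdiag : L.lift (fgraphE δ id) t t ≤ δ :=
      (hne X δ (Subtype.coe_lt_coe.1 hε) t t).trans_eq (by simp [fdiagE, fgraphE])
    have := lift_le_add_of_le_fcomp L (le_fgraphE_fcomp id (ε := δ) h) t t s
    linarith [Subtype.coe_le_coe.2 hdiag]
  · linarith [(L.lift R t s).2.2, (L.lift S t s).2.1]

lemma exists_lift_map_iSup_le_add (hne : LaxNonexp T L) {X X' Y Y' : Type} [Finite X']
    [Finite Y'] {R : ℕ → FRel X Y} (hR : Monotone R) (f : X' → X) (g : Y' → Y)
    (u : T.obj X') (v : T.obj Y') {δ : ℝ} (hδ : 0 < δ) :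
    ∃ N, (L.lift (fun x y => ⨆ n, R n x y) (T.map f u) (T.map g v) : ℝ) ≤
      L.lift (R N) (T.map f u) (T.map g v) + δ := by
  obtain ⟨N, hN⟩ := exists_forall_iSup_le_add (f := fun n (p : X' × Y') => R n (f p.1) (g p.2))
    (fun _ _ h _ => hR h _ _) hδ
  refine ⟨N, ?_⟩
  calc _ ≤ (L.lift (fun x y => ⨆ n, R n (f x) (g y)) u v : ℝ) := lift_map_le L _ f g u v
    _ ≤ L.lift (fun x y => R N (f x) (g y)) u v + δ :=
        lift_le_lift_add_of_le_add L hne hδ (fun x y => hN (x, y)) u v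
    _ ≤ _ := by linarith [le_lift_map L (R N) f g u v]

theorem lift_iSup_le (hne : LaxNonexp T L) (hsep : FinitarilySeparable T L) {X Y : Type}
    {R : ℕ → FRel X Y} (hR : Monotone R) (t : T.obj X) (s : T.obj Y) :
    L.lift (fun x y => ⨆ n, R n x y) t s ≤ ⨆ n, L.lift (R n) t s := by
  refine Subtype.coe_le_coe.1 (le_of_forall_pos_le_add fun ε hε => ?_)
  have hδ : 0 < ε / 5 := by positivity
  obtain ⟨_, ⟨sX, t₀, rfl⟩, ht₁, ht₂⟩ := hsep X t (ε / 5) hδ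
  obtain ⟨_, ⟨sY, s₀, rfl⟩, hs₁, hs₂⟩ := hsep Y s (ε / 5) hδ
  obtain ⟨N, hN⟩ := exists_lift_map_iSup_le_add L hne hR Subtype.val Subtype.val t₀ s₀ hδ
  set Rω : FRel X Y := fun x y => ⨆ n, R n x y
  set t' := T.map Subtype.val t₀
  set s' := T.map Subtype.val s₀
  have hsup : (L.lift (R N) t s : ℝ) ≤ (⨆ n, L.lift (R n) t s : I) :=
    Subtype.coe_le_coe.2 (le_iSup (fun n => L.lift (R n) t s) N)
  calc (L.lift Rω t s : ℝ)
      ≤ L.lift (fdiag X) t t' + L.lift Rω t' s' + L.lift (fdiag Y) s' s := by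
        linarith [lift_le_fdiag_add L Rω t t' s, lift_le_add_fdiag L Rω t' s s']
    _ ≤ L.lift (fdiag X) t t' + L.lift (R N) t' s' + ε / 5 + L.lift (fdiag Y) s' s := by
        linarith
    _ ≤ L.lift (R N) t s + ε := by
        linarith [lift_le_fdiag_add L (R N) t' t s', lift_le_add_fdiag L (R N) t s' s]
    _ ≤ _ := by linarith

end Lift

section Iteration

variable {T : SetFunctor} {L : LaxExt T} {A B : Type} {α : A → T.obj A} {β : B → T.obj B}
  {d : ℕ → FRel A B}

lemma iterate_monotone (hd0 : ∀ a b, d 0 a b = 0)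
    (hdsucc : ∀ n a b, d (n + 1) a b = L.lift (d n) (α a) (β b)) : Monotone d := by
  refine monotone_nat_of_le_succ fun n => ?_
  induction n with
  | zero => intro a b; rw [hd0]; exact nonneg'
  | succ n ih => intro a b; rw [hdsucc, hdsucc]; exact L.mono _ _ ih _ _

lemma iterate_le_of_isSim (hd0 : ∀ a b, d 0 a b = 0)
    (hdsucc : ∀ n a b, d (n + 1) a b = L.lift (d n) (α a) (β b)) {R : FRel A B}
    (hR : IsSim T L α β R) (n : ℕ) : d n ≤ R := by
  induction n with
  | zero => intro a b; rw [hd0]; exact nonneg'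
  | succ n ih => intro a b; rw [hdsucc]; exact (L.mono _ _ ih _ _).trans (hR a b)

end Iteration

/-- for a nonexpansive finitarily separable lax extension, the fixpoint
iteration `d₀ = 0`, `d_{n+1} = Ld_n ∘ (α × β)` converges at `ω`, and its supremum `d_ω`
equals `L`-behavioural distance. -/
theorem fixpoint_iteration_omega (T : SetFunctor) (L : LaxExt T)
    (hne : LaxNonexp T L) (hsep : FinitarilySeparable T L)
    (A B : Type) (α : A → T.obj A) (β : B → T.obj B)
    (d : ℕ → FRel A B)
    (hd0 : ∀ a b, d 0 a b = 0)
    (hdsucc : ∀ n a b, d (n + 1) a b = L.lift (d n) (α a) (β b)) :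
    (∀ a b, L.lift (fun a b => ⨆ n : ℕ, d n a b) (α a) (β b) = ⨆ n : ℕ, d n a b) ∧
    (∀ a b, behDist T L α β a b = ⨆ n : ℕ, d n a b) := by
  have hfix : ∀ a b, L.lift (fun a b => ⨆ n, d n a b) (α a) (β b) = ⨆ n, d n a b := by
    intro a b
    refine le_antisymm ((lift_iSup_le L hne hsep (iterate_monotone hd0 hdsucc) _ _).trans
      (iSup_le fun n => ?_)) (iSup_le fun n => ?_)
    · rw [← hdsucc]; exact le_iSup (fun n => d n a b) (n + 1)
    · cases n with
      | zero => rw [hd0]; exact nonneg'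
      | succ n => rw [hdsucc]; exact L.mono _ _ (fun a b => le_iSup (fun n => d n a b) n) _ _
  refine ⟨hfix, fun a b => le_antisymm ?_ ?_⟩
  · exact iInf_le (fun R : {R // IsSim T L α β R} => R.1 a b) ⟨_, fun a b => (hfix a b).le⟩
  · exact le_iInf fun R => iSup_le fun n => iterate_le_of_isSim hd0 hdsucc R.2 n a b
end
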